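/- arXiv:2312.05088 — 2 statements merged into one kernel-verified Lean document; each statement's English description precedes it below -/
import Mathlib

section
/- Let p, p₁, p₂, q : ℝⁿ → [1,∞] be measurable with 1/p = 1/p₁ + 1/p₂ pointwise. Then ‖(f_j g_j)_j‖_{ℓ^{q(·)}(L^{p(·)})} ≲ (sup_{k∈ℕ₀} ‖f_k‖_{p₁(·)}) · ‖(g_j)_j‖_{ℓ^{q(·)}(L^{p₂(·)})} for all sequences of measurable functions. -/
open MeasureTheory ENNReal Filter
open scoped SchwartzMap FourierTransform

noncomputable section

/-- Euclidean space ℝⁿ. -/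
abbrev En (n : ℕ) := EuclideanSpace ℝ (Fin n)

/-- `ω_p(t)`: `t^p` for finite `p`; for `p = ∞` it is `0` if `t ≤ 1` and `∞` otherwise. -/
def omegaP (p t : ℝ≥0∞) : ℝ≥0∞ :=
  if p = ∞ then (if t ≤ 1 then 0 else ∞) else t ^ p.toReal

/-- Variable exponent modular `ρ_{p(·)}` on nonnegative (ℝ≥0∞-valued) functions. -/
def rhoP {n : ℕ} (p : En n → ℝ≥0∞) (F : En n → ℝ≥0∞) : ℝ≥0∞ :=
  ∫⁻ x, omegaP (p x) (F x)

/-- Luxemburg norm for the variable exponent Lebesgue space. -/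
def luxNorm {n : ℕ} (p : En n → ℝ≥0∞) (F : En n → ℝ≥0∞) : ℝ≥0∞ :=
  sInf {l : ℝ≥0∞ | 0 < l ∧ rhoP p (fun x => F x / l) ≤ 1}

/-- The nonnegative absolute value of a real function, as an ℝ≥0∞-valued function. -/
def nnAbs {n : ℕ} (f : En n → ℝ) : En n → ℝ≥0∞ := fun x => ENNReal.ofReal |f x|

/-- Modular of the mixed Lebesgue-sequence space `ℓ^{q(·)}(L^{p(·)})`
(convention `λ^{1/∞} = λ^0 = 1`). -/
def mixedModular {n : ℕ} (q p : En n → ℝ≥0∞) (F : ℕ → En n → ℝ≥0∞) : ℝ≥0∞ :=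
  ∑' j, sInf {l : ℝ≥0∞ | 0 < l ∧ rhoP p (fun x => F j x / l ^ ((q x)⁻¹).toReal) ≤ 1}

/-- Quasi-norm of the mixed Lebesgue-sequence space `ℓ^{q(·)}(L^{p(·)})`. -/
def mixedNorm {n : ℕ} (q p : En n → ℝ≥0∞) (F : ℕ → En n → ℝ≥0∞) : ℝ≥0∞ :=
  sInf {m : ℝ≥0∞ | 0 < m ∧ mixedModular q p (fun j x => F j x / m) ≤ 1}

/-- `g` is locally log-Hölder continuous with constant `c`. -/
def LocLogHolder {n : ℕ} (c : ℝ) (g : En n → ℝ) : Prop :=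
  0 < c ∧ ∀ x y : En n, |g x - g y| ≤ c / Real.log (Real.exp 1 + 1 / ‖x - y‖)

/-- `g ∈ C^log_loc(ℝⁿ)`. -/
def ClogLoc {n : ℕ} (g : En n → ℝ) : Prop := ∃ c, LocLogHolder c g

/-- `g` is globally log-Hölder continuous: locally log-Hölder plus the log-Hölder
decay condition at infinity. -/
def GlobLogHolder {n : ℕ} (g : En n → ℝ) : Prop :=
  ClogLoc g ∧ ∃ c g_inf : ℝ, 0 < c ∧ ∀ x : En n, |g x - g_inf| ≤ c / Real.log (Real.exp 1 + ‖x‖)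

/-- A measurable variable exponent `p : ℝⁿ → [1,∞]`. -/
def IsExponent {n : ℕ} (p : En n → ℝ≥0∞) : Prop := Measurable p ∧ ∀ x, 1 ≤ p x

/-- `p ∈ 𝒫^log(ℝⁿ)`: a variable exponent with `1/p` globally log-Hölder continuous. -/
def Plog {n : ℕ} (p : En n → ℝ≥0∞) : Prop :=
  IsExponent p ∧ GlobLogHolder (fun x => ((p x)⁻¹).toReal)

/-- Convolution of two real functions. -/
def conv {n : ℕ} (φ f : En n → ℝ) (x : En n) : ℝ := ∫ y, φ (x - y) * f y

/-- Partial derivative in the `k`-th coordinate direction. -/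
def pderiv {n : ℕ} (k : Fin n) (f : En n → ℝ) (x : En n) : ℝ :=
  fderiv ℝ f x (EuclideanSpace.single k 1)

/-- Besov quasi-norm with variable smoothness and integrability, relative to a
system `(φ_j)_j`. -/
def besovNorm {n : ℕ} (φ : ℕ → En n → ℝ) (s : En n → ℝ) (q p : En n → ℝ≥0∞)
    (g : En n → ℝ) : ℝ≥0∞ :=
  mixedNorm q p (fun j x => ENNReal.ofReal ((2:ℝ) ^ ((j:ℝ) * s x) * |conv (φ j) g x|))

/-- A smooth dyadic resolution of unity `(ℱφ_j)_j`. -/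
structure DyadicResolution (n : ℕ) where
  φ : ℕ → 𝓢(En n, ℝ)
  supp_zero : ∀ ξ : En n, 2 < ‖ξ‖ → 𝓕 (fun y => (φ 0 y : ℂ)) ξ = 0
  supp_pos : ∀ j : ℕ, 0 < j → ∀ ξ : En n,
      (‖ξ‖ < (2:ℝ) ^ ((j:ℤ) - 1) ∨ (2:ℝ) ^ ((j:ℤ) + 1) < ‖ξ‖) →
      𝓕 (fun y => (φ j y : ℂ)) ξ = 0
  sum_one : ∀ ξ : En n, ∑' j, 𝓕 (fun y => (φ j y : ℂ)) ξ = 1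

/-- The commutator `[V·∇, Δ_j]f` relative to a convolution kernel `φj`. -/
def commVf {n : ℕ} (φj : En n → ℝ) (V : Fin n → En n → ℝ) (f : En n → ℝ)
    (x : En n) : ℝ :=
  ∑ k, (V k x * pderiv k (conv φj f) x - conv φj (fun y => V k y * pderiv k f y) x)

end

/-! For `1/p = 1/p₁ + 1/p₂`, Young's inequality gives the pointwise bound
`ω_p(ts) ≤ ω_{p₁}(t) + ω_{p₂}(s)`, and `ω_p(t/2) ≤ ω_p(t)/2` because `p ≥ 1`. Hence, if every
`f_k / a` has modular at most one and `m` is admissible for the mixed modular of `g`, every `l`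
admissible for the `j`-th term of `g / m` is admissible for the `j`-th term of `fg / (2am)`, so
the mixed norm of `fg` is at most `2am`. Taking `a` and `m` within a factor two of the norms gives
the constant `8`. When one norm vanishes and the other is infinite, the right-hand side is `0 · ∞`;
this case is covered by showing that a function of vanishing Luxemburg norm vanishes a.e.
(monotone convergence applied to `ω_p(N F)`, `N → ∞`). -/

namespace ENNReal

theorem mul_rpow_le_rpow_add_rpow {a b c : ℝ} (h : b.HolderTriple c a) (t s : ℝ≥0∞) :
    (t * s) ^ a ≤ t ^ b + s ^ c := by
  have ha := h.pos'
  have hconj := h.holderConjugate_div_div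
  calc (t * s) ^ a = t ^ a * s ^ a := mul_rpow_of_nonneg _ _ ha.le
    _ ≤ (t ^ a) ^ (b / a) / ENNReal.ofReal (b / a) + (s ^ a) ^ (c / a) / ENNReal.ofReal (c / a) :=
      young_inequality _ _ hconj
    _ ≤ (t ^ a) ^ (b / a) + (s ^ a) ^ (c / a) := by
      gcongr <;> refine div_le_of_le_mul (le_mul_of_one_le_right' (one_le_ofReal.2 ?_))
      exacts [hconj.lt.le, hconj.symm.lt.le]
    _ = t ^ b + s ^ c := by
      rw [← rpow_mul, ← rpow_mul, mul_div_cancel₀ _ ha.ne', mul_div_cancel₀ _ ha.ne']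

end ENNReal

section Modular

variable {P a b c t s : ℝ≥0∞}

theorem omegaP_top (t : ℝ≥0∞) : omegaP ∞ t = if t ≤ 1 then 0 else ∞ := if_pos rfl

theorem omegaP_of_ne_top (hP : P ≠ ∞) (t : ℝ≥0∞) : omegaP P t = t ^ P.toReal := if_neg hP

theorem omegaP_monotone (P : ℝ≥0∞) : Monotone (omegaP P) := by
  intro t s hts
  rcases eq_or_ne P ∞ with rfl | hP
  · simp only [omegaP_top]
    split_ifs with ht hs hs
    exacts [le_rfl, le_top, absurd (hts.trans hs) ht, le_rfl]
  · simp only [omegaP_of_ne_top hP]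
    exact rpow_le_rpow hts toReal_nonneg

theorem omegaP_zero (hP : P ≠ 0) : omegaP P 0 = 0 := by
  rcases eq_or_ne P ∞ with rfl | hP'
  · simp [omegaP_top]
  · rw [omegaP_of_ne_top hP', zero_rpow_of_pos (toReal_pos hP hP')]

theorem omegaP_half (hP : 1 ≤ P) (t : ℝ≥0∞) : omegaP P (t / 2) ≤ omegaP P t / 2 := by
  rcases eq_or_ne P ∞ with rfl | hP'
  · by_cases ht : t / 2 ≤ 1
    · simp [omegaP_top, ht]
    · have ht' : ¬ t ≤ 1 := fun h => ht (ENNReal.half_le_self.trans h)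
      simp [omegaP_top, ht, ht', top_div_of_ne_top]
  · rw [omegaP_of_ne_top hP', omegaP_of_ne_top hP', div_rpow_of_nonneg _ _ toReal_nonneg]
    gcongr
    calc (2 : ℝ≥0∞) = 2 ^ (1 : ℝ) := (rpow_one 2).symm
      _ ≤ 2 ^ P.toReal := rpow_le_rpow_of_exponent_le one_le_two (by simpa using toReal_mono hP' hP)

theorem le_omegaP_add_one (hP : 1 ≤ P) (t : ℝ≥0∞) : t ≤ omegaP P t + 1 := by
  rcases le_or_gt t 1 with ht | ht
  · exact ht.trans le_add_self
  refine le_add_right ?_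
  rcases eq_or_ne P ∞ with rfl | hP'
  · simp [omegaP_top, ht.not_ge]
  · rw [omegaP_of_ne_top hP']
    calc t = t ^ (1 : ℝ) := (rpow_one t).symm
      _ ≤ t ^ P.toReal := rpow_le_rpow_of_exponent_le ht.le (by simpa using toReal_mono hP' hP)

theorem iSup_omegaP_natCast_mul (hP : 1 ≤ P) (ht : t ≠ 0) : ⨆ N : ℕ, omegaP P (N * t) = ∞ := by
  have h : ∞ ≤ (⨆ N : ℕ, omegaP P (N * t)) + 1 := calc
    ∞ = ⨆ N : ℕ, (N : ℝ≥0∞) * t := by rw [← ENNReal.iSup_mul, iSup_natCast, top_mul ht]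
    _ ≤ ⨆ N : ℕ, (omegaP P (N * t) + 1) := iSup_mono fun N => le_omegaP_add_one hP _
    _ = (⨆ N : ℕ, omegaP P (N * t)) + 1 := (ENNReal.iSup_add _).symm
  simpa using h

theorem omegaP_mul_le_omegaP_top_add (c t s : ℝ≥0∞) :
    omegaP c (t * s) ≤ omegaP ∞ t + omegaP c s := by
  by_cases ht : t ≤ 1
  · simpa [omegaP_top, ht] using omegaP_monotone c (mul_le_of_le_one_left' ht)
  · simp [omegaP_top, ht]

theorem omegaP_mul_le (hb : b ≠ 0) (hc : c ≠ 0) (h : a⁻¹ = b⁻¹ + c⁻¹) (t s : ℝ≥0∞) :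
    omegaP a (t * s) ≤ omegaP b t + omegaP c s := by
  rcases eq_or_ne b ∞ with rfl | hb'
  · obtain rfl : a = c := by simpa using h
    exact omegaP_mul_le_omegaP_top_add a t s
  rcases eq_or_ne c ∞ with rfl | hc'
  · obtain rfl : a = b := by simpa using h
    rw [mul_comm, add_comm]
    exact omegaP_mul_le_omegaP_top_add a s t
  have : HolderTriple b c a := ⟨h.symm⟩
  have ha' : a ≠ ∞ := ((HolderTriple.le b c a).trans_lt hb'.lt_top).ne
  rw [omegaP_of_ne_top ha', omegaP_of_ne_top hb', omegaP_of_ne_top hc']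
  exact mul_rpow_le_rpow_add_rpow
    (HolderTriple.toReal (r := a) (toReal_pos hb hb') (toReal_pos hc hc')) t s

theorem measurable_omegaP {α : Type*} [MeasurableSpace α] {P F : α → ℝ≥0∞} (hP : Measurable P)
    (hF : Measurable F) : Measurable fun x => omegaP (P x) (F x) := by
  unfold omegaP
  refine Measurable.ite (hP (measurableSet_singleton ∞)) ?_ ?_
  · exact Measurable.ite (hF measurableSet_Iic) measurable_const measurable_const
  · exact hF.pow (measurable_toReal.comp hP)

end Modular

section VariableLebesgue

variable {n : ℕ} {p p₁ p₂ q P : En n → ℝ≥0∞} {F G : En n → ℝ≥0∞}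

theorem rhoP_mono (h : F ≤ G) : rhoP P F ≤ rhoP P G :=
  lintegral_mono fun x => omegaP_monotone _ (h x)

theorem rhoP_eq_zero_of_ae_eq_zero (hP : ∀ x, P x ≠ 0) (h : F =ᵐ[volume] 0) : rhoP P F = 0 :=
  (lintegral_congr_ae (h.mono fun x hx => by simp [hx, omegaP_zero (hP x)])).trans lintegral_zero

theorem rhoP_div_le_one_of_luxNorm_lt {a : ℝ≥0∞} (h : luxNorm P F < a) :
    rhoP P (fun x => F x / a) ≤ 1 := by
  obtain ⟨l, ⟨-, hl⟩, hla⟩ := sInf_lt_iff.mp h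
  exact (rhoP_mono fun x => ENNReal.div_le_div_left hla.le _).trans hl

theorem rhoP_mul_div_two_le (hp : ∀ x, 1 ≤ p x) (hp₁ : Measurable p₁) (hp₁0 : ∀ x, p₁ x ≠ 0)
    (hp₂0 : ∀ x, p₂ x ≠ 0) (hps : ∀ x, (p x)⁻¹ = (p₁ x)⁻¹ + (p₂ x)⁻¹) (hF : Measurable F)
    (G : En n → ℝ≥0∞) :
    rhoP p (fun x => F x * G x / 2) ≤ (rhoP p₁ F + rhoP p₂ G) / 2 := calc
  ∫⁻ x, omegaP (p x) (F x * G x / 2)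
      ≤ ∫⁻ x, 2⁻¹ * (omegaP (p₁ x) (F x) + omegaP (p₂ x) (G x)) := by
    refine lintegral_mono fun x => (omegaP_half (hp x) _).trans ?_
    rw [ENNReal.div_eq_inv_mul]
    gcongr
    exact omegaP_mul_le (hp₁0 x) (hp₂0 x) (hps x) _ _
  _ = (rhoP p₁ F + rhoP p₂ G) / 2 := by
    rw [lintegral_const_mul' _ _ (by simp), lintegral_add_left (measurable_omegaP hp₁ hF),
      ENNReal.div_eq_inv_mul, rhoP, rhoP]

theorem ae_eq_zero_of_luxNorm_eq_zero (hPm : Measurable P) (hP : ∀ x, 1 ≤ P x)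
    (hF : Measurable F) (h : luxNorm P F = 0) : F =ᵐ[volume] 0 := by
  set Φ : ℕ → En n → ℝ≥0∞ := fun N x => omegaP (P x) (N * F x)
  have hΦ_le : ∀ N, ∫⁻ x, Φ N x ≤ 1 := fun N => by
    have := rhoP_div_le_one_of_luxNorm_lt (h.trans_lt (ENNReal.inv_pos.2 (natCast_ne_top N)))
    simpa [rhoP, Φ, div_eq_mul_inv, mul_comm] using this
  have hΦm : ∀ N, Measurable (Φ N) := fun N => measurable_omegaP hPm (hF.const_mul _)
  have hΦmono : Monotone Φ := fun N M hNM x => omegaP_monotone _ (by gcongr)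
  have hfin : ∀ᵐ x, ⨆ N, Φ N x < ∞ := by
    refine ae_lt_top (Measurable.iSup hΦm) (ne_top_of_le_ne_top one_ne_top ?_)
    rw [lintegral_iSup hΦm hΦmono]
    exact iSup_le hΦ_le
  filter_upwards [hfin] with x hx
  by_contra hne
  exact hx.ne (iSup_omegaP_natCast_mul (hP x) hne)

end VariableLebesgue

section MixedNorm

variable {n : ℕ} {p p₁ p₂ q P : En n → ℝ≥0∞}

theorem luxNorm_le_two_mul_mixedNorm (hq : ∀ x, 1 ≤ q x) (G : ℕ → En n → ℝ≥0∞) (j : ℕ) :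
    luxNorm P (G j) ≤ 2 * mixedNorm q P G := by
  rw [mul_comm, ← ENNReal.div_le_iff_le_mul (.inl two_ne_zero) (.inl ofNat_ne_top)]
  refine le_sInf fun m ⟨hm, hmod⟩ => ENNReal.div_le_of_le_mul' (sInf_le ⟨by positivity, ?_⟩)
  obtain ⟨l, ⟨hl, hρ⟩, hl2⟩ :=
    sInf_lt_iff.mp (((ENNReal.le_tsum j).trans hmod).trans_lt one_lt_two)
  refine (rhoP_mono fun x => ?_).trans hρ
  have hr : ((q x)⁻¹).toReal ≤ 1 :=
    toReal_le_of_le_ofReal zero_le_one (by simpa using ENNReal.inv_le_one.2 (hq x))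
  have hlr : l ^ ((q x)⁻¹).toReal ≤ 2 := calc
    l ^ ((q x)⁻¹).toReal ≤ 2 ^ ((q x)⁻¹).toReal := rpow_le_rpow hl2.le toReal_nonneg
    _ ≤ 2 ^ (1 : ℝ) := rpow_le_rpow_of_exponent_le one_le_two hr
    _ = 2 := rpow_one 2
  calc G j x / (2 * m) = G j x / m / 2 := by
        rw [div_eq_mul_inv, div_eq_mul_inv, div_eq_mul_inv, ENNReal.mul_inv (.inl two_ne_zero)
          (.inl ofNat_ne_top), mul_comm 2⁻¹, mul_assoc]
    _ ≤ G j x / m / l ^ ((q x)⁻¹).toReal := ENNReal.div_le_div_left hlr _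

theorem mixedNorm_eq_zero_of_ae_eq_zero (hP : ∀ x, P x ≠ 0) {F : ℕ → En n → ℝ≥0∞}
    (h : ∀ j, F j =ᵐ[volume] 0) : mixedNorm q P F = 0 := by
  have sInf_eq_zero : ∀ {S : Set ℝ≥0∞}, (∀ l, 0 < l → l ∈ S) → sInf S = 0 := fun hS =>
    sInf_eq_bot.2 fun b hb => let ⟨a, ha, hab⟩ := exists_between hb; ⟨a, hS a ha, hab⟩
  have hmod : ∀ m, mixedModular q P (fun j x => F j x / m) = 0 := fun m =>
    ENNReal.tsum_eq_zero.2 fun j => sInf_eq_zero fun l hl =>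
      ⟨hl, (rhoP_eq_zero_of_ae_eq_zero hP ((h j).mono fun x hx => by simp [hx])).le.trans
        zero_le_one⟩
  exact sInf_eq_zero fun m hm => ⟨hm, (hmod m).le.trans zero_le_one⟩

theorem mixedNorm_mul_le_of_rhoP_le_one (hp : ∀ x, 1 ≤ p x) (hp₁ : Measurable p₁)
    (hp₁0 : ∀ x, p₁ x ≠ 0) (hp₂0 : ∀ x, p₂ x ≠ 0) (hps : ∀ x, (p x)⁻¹ = (p₁ x)⁻¹ + (p₂ x)⁻¹)
    {F G : ℕ → En n → ℝ≥0∞} (hF : ∀ j, Measurable (F j)) {a m : ℝ≥0∞} (ha : a ≠ 0)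
    (hFa : ∀ k, rhoP p₁ (fun x => F k x / a) ≤ 1) (hm : m ≠ 0)
    (hGm : mixedModular q p₂ (fun j x => G j x / m) ≤ 1) :
    mixedNorm q p (fun j x => F j x * G j x) ≤ 2 * a * m := by
  refine sInf_le ⟨by positivity, (ENNReal.tsum_le_tsum fun j => sInf_le_sInf ?_).trans hGm⟩
  rintro l ⟨hl, hρ⟩
  refine ⟨hl, ?_⟩
  have hinv : (2 * a * m)⁻¹ = 2⁻¹ * a⁻¹ * m⁻¹ := by
    rw [ENNReal.mul_inv (.inl (mul_ne_zero two_ne_zero ha)) (.inr hm),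
      ENNReal.mul_inv (.inl two_ne_zero) (.inl ofNat_ne_top)]
  calc rhoP p (fun x => F j x * G j x / (2 * a * m) / l ^ ((q x)⁻¹).toReal)
      = rhoP p (fun x => F j x / a * (G j x / m / l ^ ((q x)⁻¹).toReal) / 2) := by
        congr 1
        ext x
        simp only [div_eq_mul_inv, hinv]
        ring
    _ ≤ (rhoP p₁ (fun x => F j x / a) + rhoP p₂ (fun x => G j x / m / l ^ ((q x)⁻¹).toReal)) / 2 :=
        rhoP_mul_div_two_le hp hp₁ hp₁0 hp₂0 hps ((hF j).div_const a) _
    _ ≤ (1 + 1) / 2 := by gcongr; exact hFa j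
    _ = 1 := by rw [one_add_one_eq_two, ENNReal.div_self two_ne_zero ofNat_ne_top]

end MixedNorm

theorem mixedNorm_mul_le {n : ℕ} {p p₁ p₂ q : En n → ℝ≥0∞} (hp : ∀ x, 1 ≤ p x)
    (hp₁ : IsExponent p₁) (hp₂ : IsExponent p₂) (hq : ∀ x, 1 ≤ q x)
    (hps : ∀ x, (p x)⁻¹ = (p₁ x)⁻¹ + (p₂ x)⁻¹) {F G : ℕ → En n → ℝ≥0∞}
    (hF : ∀ j, Measurable (F j)) (hG : ∀ j, Measurable (G j)) :
    mixedNorm q p (fun j x => F j x * G j x) ≤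
      8 * (⨆ k, luxNorm p₁ (F k)) * mixedNorm q p₂ G := by
  have ne_zero_of_one_le : ∀ {P : En n → ℝ≥0∞}, (∀ x, 1 ≤ P x) → ∀ x, P x ≠ 0 :=
    fun hP x => (zero_lt_one.trans_le (hP x)).ne'
  set A := ⨆ k, luxNorm p₁ (F k)
  set B := mixedNorm q p₂ G
  have hGB : ∀ j, luxNorm p₂ (G j) ≤ 2 * B := luxNorm_le_two_mul_mixedNorm hq G
  rcases eq_or_ne A 0 with hA0 | hA0
  · refine (mixedNorm_eq_zero_of_ae_eq_zero (ne_zero_of_one_le hp) fun j => ?_).trans_le zero_le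
    have hFj := ae_eq_zero_of_luxNorm_eq_zero hp₁.1 hp₁.2 (hF j)
      (nonpos_iff_eq_zero.1 (hA0 ▸ le_iSup (fun k => luxNorm p₁ (F k)) j))
    filter_upwards [hFj] with x hx
    simp [hx]
  rcases eq_or_ne B 0 with hB0 | hB0
  · refine (mixedNorm_eq_zero_of_ae_eq_zero (ne_zero_of_one_le hp) fun j => ?_).trans_le zero_le
    have hGj := ae_eq_zero_of_luxNorm_eq_zero hp₂.1 hp₂.2 (hG j) (by simpa [hB0] using hGB j)
    filter_upwards [hGj] with x hx
    simp [hx]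
  rcases eq_or_ne A ∞ with hAt | hAt
  · simp [hAt, hB0]
  rcases eq_or_ne B ∞ with hBt | hBt
  · simp [hBt, hA0]
  have hA2 : A < 2 * A := by simpa [two_mul] using ENNReal.lt_add_right hAt hA0
  have hB2 : B < 2 * B := by simpa [two_mul] using ENNReal.lt_add_right hBt hB0
  obtain ⟨m, ⟨hm, hGm⟩, hmB⟩ := sInf_lt_iff.mp hB2
  calc mixedNorm q p (fun j x => F j x * G j x)
      ≤ 2 * (2 * A) * m :=
        mixedNorm_mul_le_of_rhoP_le_one hp hp₁.1 (ne_zero_of_one_le hp₁.2)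
          (ne_zero_of_one_le hp₂.2) hps hF (by positivity)
          (fun k => rhoP_div_le_one_of_luxNorm_lt ((le_iSup _ k).trans_lt hA2)) hm.ne' hGm
    _ ≤ 2 * (2 * A) * (2 * B) := by gcongr
    _ = 8 * A * B := by ring

/-- Hölder inequality in mixed spaces with a uniform `L^{p₁(·)}` factor. -/
theorem stmt10 {n : ℕ} (p p₁ p₂ q : En n → ℝ≥0∞)
    (hp : IsExponent p) (hp₁ : IsExponent p₁) (hp₂ : IsExponent p₂) (hq : IsExponent q)
    (hps : ∀ x, (p x)⁻¹ = (p₁ x)⁻¹ + (p₂ x)⁻¹) :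
    ∃ c : ℝ≥0∞, c ≠ ∞ ∧ ∀ f g : ℕ → En n → ℝ,
      (∀ j, Measurable (f j)) → (∀ j, Measurable (g j)) →
      mixedNorm q p (fun j x => ENNReal.ofReal |f j x * g j x|) ≤
        c * (⨆ k, luxNorm p₁ (nnAbs (f k))) * mixedNorm q p₂ (fun j => nnAbs (g j)) := by
  refine ⟨8, ofNat_ne_top, fun f g hf hg => ?_⟩
  have hfg : (fun j x => ENNReal.ofReal |f j x * g j x|) =
      fun j x => nnAbs (f j) x * nnAbs (g j) x := by
    ext j x
    rw [abs_mul, ENNReal.ofReal_mul (abs_nonneg _), nnAbs, nnAbs]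
  rw [hfg]
  exact mixedNorm_mul_le hp.2 hp₁ hp₂ hq.2 hps (fun j => (hf j).abs.ennreal_ofReal)
    fun j => (hg j).abs.ennreal_ofReal
end

section
/- Let α : ℝⁿ → ℝ be locally log-Hölder continuous with constant c_log(α), and let R ≥ c_log(α). Then for all x, y ∈ ℝⁿ and all j, m ∈ ℕ₀, 2^{jα(x)} η_{j,m+R}(x−y) ≤ c · 2^{jα(y)} η_{j,m}(x−y), where c > 0 is independent of x, y, j, m. -/
open MeasureTheory ENNReal Filter
open scoped SchwartzMap FourierTransform

/-- The kernel `η_{j,m}(x) = 2^{jn}(1 + 2^j |x|)^{-m}`. -/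
noncomputable def etaJM (n : ℕ) (j : ℕ) (m : ℝ) (x : En n) : ℝ :=
  (2:ℝ) ^ ((j:ℝ) * (n:ℝ)) * (1 + (2:ℝ) ^ (j:ℝ) * ‖x‖) ^ (-m)

/-! With `t = |x - y|`, `L = log (e + 1/t) ≥ max 1 (log (1/t))` and
`B = log (1 + 2^j t) ≥ max 0 (j log 2 + log t)`, so `j log 2 ≤ log (1/t) + B ≤ L (1 + B)`.
The log-Hölder bound `|α x - α y| ≤ c / L` therefore gives
`2^{j(α x - α y)} ≤ e^c (1 + 2^j t)^c`, and the extra decay `R ≥ c` of the kernel absorbs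
`(1 + 2^j t)^c`. -/

open Real

theorem Real.log_le_log_exp_add_one_div_mul {l t : ℝ} (hl : 0 < l) (ht : 0 < t) :
    log l ≤ log (exp 1 + 1 / t) * (1 + log (1 + l * t)) := by
  have hinv : log (1 / t) ≤ log (exp 1 + 1 / t) :=
    log_le_log (by positivity) (by linarith [exp_pos 1])
  have hone : 1 ≤ log (exp 1 + 1 / t) := by
    rw [le_log_iff_exp_le (by positivity)]
    linarith [one_div_pos.2 ht]
  have hprod : log (l * t) ≤ log (1 + l * t) := log_le_log (by positivity) (by linarith)
  have hprod_nonneg : 0 ≤ log (1 + l * t) := log_nonneg (by linarith [mul_pos hl ht])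
  have hsplit : log l = log (l * t) + log (1 / t) := by
    rw [log_mul hl.ne' ht.ne', one_div, log_inv]; ring
  nlinarith [mul_nonneg (sub_nonneg.2 hone) hprod_nonneg]

namespace LocLogHolder

variable {n : ℕ} {c : ℝ} {α : En n → ℝ}

theorem rpow_sub_le (hα : LocLogHolder c α) {l : ℝ} (hl : 1 ≤ l) (x y : En n) :
    l ^ (α x - α y) ≤ exp c * (1 + l * ‖x - y‖) ^ c := by
  obtain ⟨hc, hlog⟩ := hα
  rcases eq_or_ne x y with rfl | hxy
  · simpa using one_le_exp hc.le
  have ht : 0 < ‖x - y‖ := norm_pos_iff.2 (sub_ne_zero.2 hxy)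
  have hlog_l : 0 ≤ Real.log l := log_nonneg hl
  have hlog_dist : 0 < Real.log (exp 1 + 1 / ‖x - y‖) :=
    log_pos (by linarith [one_lt_exp_iff.2 one_pos, one_div_pos.2 ht])
  have hexponent : (α x - α y) * Real.log l ≤ c * (1 + Real.log (1 + l * ‖x - y‖)) :=
    calc (α x - α y) * Real.log l
        ≤ |α x - α y| * Real.log l := mul_le_mul_of_nonneg_right (le_abs_self _) hlog_l
      _ ≤ c / Real.log (exp 1 + 1 / ‖x - y‖) * Real.log l :=
          mul_le_mul_of_nonneg_right (hlog x y) hlog_l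
      _ ≤ c / Real.log (exp 1 + 1 / ‖x - y‖) *
            (Real.log (exp 1 + 1 / ‖x - y‖) * (1 + Real.log (1 + l * ‖x - y‖))) :=
          mul_le_mul_of_nonneg_left (log_le_log_exp_add_one_div_mul (by linarith) ht)
            (by positivity)
      _ = c * (1 + Real.log (1 + l * ‖x - y‖)) := by
        rw [← mul_assoc, div_mul_cancel₀ _ hlog_dist.ne']
  calc l ^ (α x - α y)
      = exp ((α x - α y) * Real.log l) := by rw [rpow_def_of_pos (by linarith), mul_comm]
    _ ≤ exp (c * (1 + Real.log (1 + l * ‖x - y‖))) := exp_le_exp.2 hexponent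
    _ = exp c * (1 + l * ‖x - y‖) ^ c := by
      rw [rpow_def_of_pos (by positivity), ← exp_add]; ring_nf

theorem rpow_sub_mul_rpow_neg_le (hα : LocLogHolder c α) {R : ℝ} (hR : c ≤ R) {l : ℝ}
    (hl : 1 ≤ l) (x y : En n) :
    l ^ (α x - α y) * (1 + l * ‖x - y‖) ^ (-R) ≤ exp c := by
  have hbase : 1 ≤ 1 + l * ‖x - y‖ := by nlinarith [norm_nonneg (x - y)]
  calc l ^ (α x - α y) * (1 + l * ‖x - y‖) ^ (-R)
      ≤ exp c * (1 + l * ‖x - y‖) ^ c * (1 + l * ‖x - y‖) ^ (-R) :=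
        mul_le_mul_of_nonneg_right (hα.rpow_sub_le hl x y) (rpow_nonneg (by linarith) _)
    _ = exp c * (1 + l * ‖x - y‖) ^ (c - R) := by
      rw [mul_assoc, ← Real.rpow_add (by linarith), ← sub_eq_add_neg]
    _ ≤ exp c * 1 :=
      mul_le_mul_of_nonneg_left (rpow_le_one_of_one_le_of_nonpos hbase (by linarith))
        (exp_pos c).le
    _ = exp c := mul_one _

end LocLogHolder

theorem etaJM_add (n j : ℕ) (m R : ℝ) (z : En n) :
    etaJM n j (m + R) z = etaJM n j m z * (1 + (2:ℝ) ^ (j:ℝ) * ‖z‖) ^ (-R) := by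
  rw [etaJM, etaJM, neg_add, Real.rpow_add (by positivity)]; ring

theorem etaJM_nonneg (n j : ℕ) (m : ℝ) (z : En n) : 0 ≤ etaJM n j m z := by
  unfold etaJM; positivity

/-- moving a variable exponential factor inside the kernel `η`. -/
theorem stmt12 {n : ℕ} (α : En n → ℝ) (cα : ℝ) (hα : LocLogHolder cα α)
    (R : ℝ) (hR : cα ≤ R) :
    ∃ c : ℝ, 0 < c ∧ ∀ x y : En n, ∀ j m : ℕ,
      (2:ℝ) ^ ((j:ℝ) * α x) * etaJM n j ((m:ℝ) + R) (x - y) ≤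
        c * ((2:ℝ) ^ ((j:ℝ) * α y) * etaJM n j (m:ℝ) (x - y)) := by
  refine ⟨exp cα, exp_pos cα, fun x y j m => ?_⟩
  have hscale : 1 ≤ (2:ℝ) ^ (j:ℝ) := one_le_rpow one_le_two (Nat.cast_nonneg j)
  have hsplit :
      (2:ℝ) ^ ((j:ℝ) * α x) = (2:ℝ) ^ ((j:ℝ) * α y) * ((2:ℝ) ^ (j:ℝ)) ^ (α x - α y) := by
    rw [← Real.rpow_mul zero_le_two, ← Real.rpow_add two_pos]; ring_nf
  rw [etaJM_add, hsplit]
  calc (2:ℝ) ^ ((j:ℝ) * α y) * ((2:ℝ) ^ (j:ℝ)) ^ (α x - α y) *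
        (etaJM n j m (x - y) * (1 + (2:ℝ) ^ (j:ℝ) * ‖x - y‖) ^ (-R))
      = ((2:ℝ) ^ (j:ℝ)) ^ (α x - α y) * (1 + (2:ℝ) ^ (j:ℝ) * ‖x - y‖) ^ (-R) *
          ((2:ℝ) ^ ((j:ℝ) * α y) * etaJM n j m (x - y)) := by ring
    _ ≤ exp cα * ((2:ℝ) ^ ((j:ℝ) * α y) * etaJM n j m (x - y)) :=
      mul_le_mul_of_nonneg_right (hα.rpow_sub_mul_rpow_neg_le hR hscale x y)
        (mul_nonneg (rpow_nonneg zero_le_two _) (etaJM_nonneg n j m _))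
end
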